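/- With β = z/sqrt(z²-1) (z > 1 real) and E₃ the polynomial obtained from the recursion E₃(β) = (1/2)(β²-1)²E₂'(β) + (1/2)∫_0^β (p²-1)²(E₁'(p))² dp, one has β⁻¹·E₃(β) = (56z⁸ - 252z⁶ + 441z⁴ + 1860z² + 3420)/(5760(z²-1)⁴). -/

import Mathlib

/-!
`E₃` is an odd polynomial in `β`, so `β⁻¹ E₃(β)` is a polynomial in `β²`, and
`β(z)² = z² / (z² - 1)`; substituting and clearing denominators gives the formula.
-/

noncomputable def E1 (b : ℝ) : ℝ := (1 / 24) * b * (5 * b ^ 2 - 6)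

noncomputable def E2 (b : ℝ) : ℝ := (1 / 16) * (b ^ 2 - 1) ^ 2 * (5 * b ^ 2 - 2)

noncomputable def E3 (b : ℝ) : ℝ :=
  (1 / 2) * (b ^ 2 - 1) ^ 2 * deriv E2 b
    + (1 / 2) * ∫ p in (0:ℝ)..b, (p ^ 2 - 1) ^ 2 * (deriv E1 p) ^ 2

noncomputable def beta (z : ℝ) : ℝ := z / Real.sqrt (z ^ 2 - 1)

lemma deriv_E1 (b : ℝ) : deriv E1 b = (5 * b ^ 2 - 2) / 8 := by
  unfold E1
  simp (disch := fun_prop) only [deriv_fun_mul, deriv_fun_sub, deriv_fun_pow, deriv_const',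
    deriv_const_mul_id', deriv_id'', Nat.cast_ofNat, Nat.add_one_sub_one]
  ring

lemma deriv_E2 (b : ℝ) : deriv E2 b = 3 / 8 * b * (b ^ 2 - 1) * (5 * b ^ 2 - 3) := by
  unfold E2
  simp (disch := fun_prop) only [deriv_fun_mul, deriv_fun_sub, deriv_fun_pow, deriv_const',
    deriv_id'', Nat.cast_ofNat, Nat.add_one_sub_one]
  ring

lemma integral_sq_mul_sq_deriv_E1 (b : ℝ) :
    ∫ p in (0:ℝ)..b, (p ^ 2 - 1) ^ 2 * (deriv E1 p) ^ 2
      = (25 * b ^ 9 / 9 - 10 * b ^ 7 + 69 * b ^ 5 / 5 - 28 * b ^ 3 / 3 + 4 * b) / 64 := by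
  have hexpand : ∀ p : ℝ, (p ^ 2 - 1) ^ 2 * (deriv E1 p) ^ 2
      = (25 * p ^ 8 - 70 * p ^ 6 + 69 * p ^ 4 - 28 * p ^ 2 + 4) / 64 := fun p => by
    rw [deriv_E1]; ring
  simp_rw [hexpand]
  simp (disch := first | fun_prop | (apply Continuous.intervalIntegrable; fun_prop)) only
    [intervalIntegral.integral_div, intervalIntegral.integral_add, intervalIntegral.integral_sub,
      intervalIntegral.integral_const_mul, integral_pow, intervalIntegral.integral_const]
  ring

lemma E3_eq (b : ℝ) :
    E3 b = b * (3 / 16 * (b ^ 2 - 1) ^ 3 * (5 * b ^ 2 - 3)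
      + (25 * (b ^ 2) ^ 4 / 9 - 10 * (b ^ 2) ^ 3 + 69 * (b ^ 2) ^ 2 / 5 - 28 * b ^ 2 / 3 + 4) / 128) := by
  rw [E3, deriv_E2, integral_sq_mul_sq_deriv_E1]
  ring

lemma beta_sq {z : ℝ} (hz : 1 ≤ z ^ 2) : beta z ^ 2 = z ^ 2 / (z ^ 2 - 1) := by
  rw [beta, div_pow, Real.sq_sqrt (sub_nonneg.mpr hz)]

lemma beta_ne_zero {z : ℝ} (hz : 1 < z ^ 2) : beta z ≠ 0 := by
  have hz0 : z ≠ 0 := by rintro rfl; norm_num at hz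
  exact div_ne_zero hz0 (Real.sqrt_pos.mpr (sub_pos.mpr hz)).ne'

theorem G2_formula :
    ∀ z : ℝ, 1 < z →
      (beta z)⁻¹ * E3 (beta z)
        = (56 * z ^ 8 - 252 * z ^ 6 + 441 * z ^ 4 + 1860 * z ^ 2 + 3420)
            / (5760 * (z ^ 2 - 1) ^ 4) := by
  intro z hz
  have hz2 : 1 < z ^ 2 := by nlinarith
  rw [E3_eq, inv_mul_cancel_left₀ (beta_ne_zero hz2), beta_sq hz2.le]
  have : z ^ 2 - 1 ≠ 0 := (sub_pos.mpr hz2).ne'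
  field_simp
  ring
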